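/- arXiv:2509.24265 — 5 statements merged into one kernel-verified Lean document; each statement's English description precedes it below -/
import Mathlib

section
/- Let l be an odd positive integer, ε ∈ ℂ a primitive l-th root of unity, and let m, n be natural numbers with 0 ≤ m < l, 0 ≤ n < l and m + n ≥ l. Then the balanced Gaussian binomial coefficient [m+n choose n]_ε equals 0. -/
/-- The balanced quantum integer `[m]_ε = (ε^m − ε^{−m})/(ε − ε^{−1})` in `ℂ`. -/
noncomputable def qintC (ε : ℂ) (m : ℕ) : ℂ :=
  (ε ^ (m : ℤ) - ε ^ (-(m : ℤ))) / (ε - ε⁻¹)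

/-- The balanced quantum factorial `[m]!_ε = [m]_ε [m−1]_ε ⋯ [1]_ε`. -/
noncomputable def qfactC (ε : ℂ) (m : ℕ) : ℂ :=
  ∏ k ∈ Finset.range m, qintC ε (k + 1)

/-- The balanced Gaussian binomial coefficient `[m+n choose n]_ε`. -/
noncomputable def qbinomC (ε : ℂ) (m n : ℕ) : ℂ :=
  qfactC ε (m + n) / (qfactC ε m * qfactC ε n)

/-- If `l` is an odd positive integer, `ε ∈ ℂ` is a primitive `l`-th root of unity, and
`m, n` are natural numbers with `m < l`, `n < l` and `m + n ≥ l`, then the balanced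
Gaussian binomial coefficient `[m+n choose n]_ε` equals `0`. -/
theorem stmt1 (l : ℕ) (hl : Odd l) (hlpos : 0 < l) (ε : ℂ) (hε : ε ≠ 0)
    (hroot : ε ^ l = 1) (hprim : ∀ k : ℕ, 0 < k → k < l → ε ^ k ≠ 1)
    (m n : ℕ) (hm : m < l) (hn : n < l) (hmn : l ≤ m + n) :
    qbinomC ε m n = 0 := by
  have h0 : qintC ε l = 0 := by
    unfold qintC
    rw [show ε ^ (l : ℤ) = 1 by rw [zpow_natCast]; exact hroot,
        show ε ^ (-(l : ℤ)) = 1 by rw [zpow_neg, zpow_natCast, hroot, inv_one]]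
    simp
  have hfac : qfactC ε (m + n) = 0 := by
    unfold qfactC
    apply Finset.prod_eq_zero (i := l - 1) (Finset.mem_range.mpr (by omega))
    rw [show l - 1 + 1 = l by omega]
    exact h0
  simp [qbinomC, hfac]
end

section
/- Let r > 0 and s ≥ 0 be integers. In the field ℚ(v, K), one has ∑_{t=0}^{s} (−1)^t v^{r(s−t)} [r+t−1 choose t]_v K^t [K;0,r]_v [K;0,s−t]_v = [r+s choose r]_v [K;0,r+s]_v. -/
/-- The field `ℚ(v, K)` of rational functions in two variables, realized as `ℚ(v)(K)`. -/
noncomputable abbrev F2 : Type := RatFunc (RatFunc ℚ)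

/-- The variable `v` of `ℚ(v, K)`. -/
noncomputable def vv : F2 := RatFunc.C RatFunc.X

/-- The variable `K` of `ℚ(v, K)`. -/
noncomputable def KK : F2 := RatFunc.X

/-- `[K;c,t]_v = ∏_{s=1}^{t} (K v^{c−s+1} − K^{−1} v^{−c+s−1})/(v^s − v^{−s})`. -/
noncomputable def Kbr (c : ℤ) (t : ℕ) : F2 :=
  ∏ s ∈ Finset.range t,
    (KK * vv ^ (c - (s : ℤ)) - KK⁻¹ * vv ^ (-c + (s : ℤ))) /
      (vv ^ ((s : ℤ) + 1) - vv ^ (-(s : ℤ) - 1))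

/-- The balanced quantum number `[c]_v = (v^c − v^{−c})/(v − v^{−1})` for `c ∈ ℤ`. -/
noncomputable def qintF (c : ℤ) : F2 := (vv ^ c - vv ^ (-c)) / (vv - vv⁻¹)

/-- The balanced quantum factorial `[m]!_v`. -/
noncomputable def qfactF (m : ℕ) : F2 := ∏ k ∈ Finset.range m, qintF ((k : ℤ) + 1)

/-- `[c choose m]_v = [c]_v[c−1]_v⋯[c−m+1]_v/[m]!_v` for `c ∈ ℤ`, `m ∈ ℕ`. -/
noncomputable def qbinomF (c : ℤ) (m : ℕ) : F2 :=
  (∏ k ∈ Finset.range m, qintF (c - (k : ℤ))) / qfactF m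

/-!
Write `[K;0,n] = kProd n / ([n]! (v - v⁻¹)ⁿ)`, where `kProd n = ∏_{j<n} kFactor j` with
`kFactor j = K v⁻ʲ - K⁻¹ vʲ`, and `[r+t-1 choose t] = [r][r+1]⋯[r+t-1] / [t]!`. After clearing
the common denominator `[r]! [s]! (v - v⁻¹)^(r+s)` and the common factor `kProd r`, the identity
becomes `∑_t kTerm r s t = ∏_{j<s} kFactor (r+j)`, which holds for every integer `r`. It follows
by induction on `s`: the Pascal rule `[s+1 choose t+1] = v^(t+1) [s choose t+1] + v^(t-s) [s choose t]`
splits each term in two, and after regrouping, the one-factor identity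
`vᵃ kFactor m - K v⁻ᵐ (vᵃ - v⁻ᵃ) = kFactor (a+m)` turns the sum for `s` into the sum for `s+1`
times the new factor `kFactor (r+s)`.
-/

open Finset

theorem RatFunc.intDegree_X_zpow {K : Type*} [Field K] (a : ℤ) :
    RatFunc.intDegree ((RatFunc.X : RatFunc K) ^ a) = a := by
  have hpow (n : ℕ) : RatFunc.intDegree ((RatFunc.X : RatFunc K) ^ n) = n := by
    rw [← RatFunc.algebraMap_X, ← map_pow, RatFunc.intDegree_polynomial,
      Polynomial.natDegree_X_pow]
  cases a with
  | ofNat n => simpa using hpow n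
  | negSucc n => rw [zpow_negSucc, RatFunc.intDegree_inv, hpow]; rfl

theorem vv_zpow_injective : Function.Injective (vv ^ · : ℤ → F2) := by
  intro a b h
  simp only [vv, ← map_zpow₀] at h
  simpa [RatFunc.intDegree_X_zpow] using
    congrArg RatFunc.intDegree ((RatFunc.C (K := RatFunc ℚ)).injective h)

theorem vv_ne_zero : vv ≠ 0 := by simp [vv, RatFunc.X_ne_zero]

theorem vv_zpow_sub_ne_zero {c : ℤ} (hc : c ≠ 0) : vv ^ c - vv ^ (-c) ≠ 0 :=
  sub_ne_zero.mpr fun h => hc (by have := vv_zpow_injective h; omega)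

theorem vv_sub_inv_ne_zero : vv - vv⁻¹ ≠ 0 := by
  simpa using vv_zpow_sub_ne_zero one_ne_zero

theorem qintF_ne_zero {c : ℤ} (hc : c ≠ 0) : qintF c ≠ 0 :=
  div_ne_zero (vv_zpow_sub_ne_zero hc) vv_sub_inv_ne_zero

theorem qfactF_ne_zero (m : ℕ) : qfactF m ≠ 0 :=
  prod_ne_zero_iff.mpr fun _ _ => qintF_ne_zero (by omega)

theorem qintF_zero : qintF 0 = 0 := by simp [qintF]

theorem qintF_mul_vv_sub_inv (c : ℤ) : qintF c * (vv - vv⁻¹) = vv ^ c - vv ^ (-c) :=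
  div_mul_cancel₀ _ vv_sub_inv_ne_zero

theorem qintF_add (a b : ℤ) : vv ^ a * qintF b + vv ^ (-b) * qintF a = qintF (a + b) := by
  simp only [qintF, zpow_neg, zpow_add₀ vv_ne_zero, mul_inv]
  field_simp
  ring

theorem qbinomF_zero_right (c : ℤ) : qbinomF c 0 = 1 := by simp [qbinomF, qfactF]

theorem qbinomF_natCast_of_lt {n m : ℕ} (h : n < m) : qbinomF n m = 0 := by
  rw [qbinomF, prod_eq_zero (mem_range.mpr h) (by simp [qintF_zero]), zero_div]

theorem qbinomF_add_one_add_one (c : ℤ) (t : ℕ) :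
    qbinomF (c + 1) (t + 1) =
      vv ^ ((t : ℤ) + 1) * qbinomF c (t + 1) + vv ^ ((t : ℤ) - c) * qbinomF c t := by
  have hpascal := qintF_add ((t : ℤ) + 1) (c - t)
  rw [neg_sub, show (t : ℤ) + 1 + (c - t) = c + 1 by ring] at hpascal
  have := qfactF_ne_zero t
  have := qintF_ne_zero (c := (t : ℤ) + 1) (by omega)
  simp only [qbinomF, qfactF, prod_range_succ' (fun k => qintF (c + 1 - k)), prod_range_succ] at *
  push_cast
  field_simp
  simp only [add_sub_add_right_eq_sub, sub_zero, ← hpascal]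
  ring

theorem prod_qintF_natCast_sub_mul_qfactF {n m : ℕ} (h : m ≤ n) :
    (∏ k ∈ range m, qintF ((n : ℤ) - k)) * qfactF (n - m) = qfactF n := by
  obtain ⟨l, rfl⟩ := Nat.exists_eq_add_of_le h
  rw [Nat.add_sub_cancel_left, qfactF, qfactF, add_comm m, prod_range_add, mul_comm,
    ← prod_range_reflect (fun k => qintF (((l + k : ℕ) : ℤ) + 1))]
  refine congrArg _ (prod_congr rfl fun k hk => congrArg qintF ?_)
  have := mem_range.mp hk
  omega

theorem qbinomF_natCast {n m : ℕ} (h : m ≤ n) :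
    qbinomF n m = qfactF n / (qfactF m * qfactF (n - m)) := by
  rw [qbinomF, ← prod_qintF_natCast_sub_mul_qfactF h, mul_div_mul_right _ _ (qfactF_ne_zero _)]

theorem qbinomF_add_sub_one (c : ℤ) (t : ℕ) :
    qbinomF (c + t - 1) t = (∏ i ∈ range t, qintF (c + i)) / qfactF t := by
  rw [qbinomF, ← prod_range_reflect]
  refine congrArg (· / _) (prod_congr rfl fun k hk => congrArg qintF ?_)
  have := mem_range.mp hk
  omega

noncomputable def kFactor (c : ℤ) : F2 := KK * vv ^ (-c) - KK⁻¹ * vv ^ c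

noncomputable def kProd (n : ℕ) : F2 := ∏ j ∈ range n, kFactor j

theorem kProd_succ (n : ℕ) : kProd (n + 1) = kProd n * kFactor n := prod_range_succ _ _

theorem Kbr_zero_eq (n : ℕ) : Kbr 0 n = kProd n / (qfactF n * (vv - vv⁻¹) ^ n) := by
  rw [Kbr, kProd, qfactF, show (vv - vv⁻¹) ^ n = ∏ _j ∈ range n, (vv - vv⁻¹) by simp,
    ← prod_mul_distrib, ← prod_div_distrib]
  refine prod_congr rfl fun j _ => ?_
  rw [qintF_mul_vv_sub_inv, kFactor]
  ring_nf

theorem kFactor_add (a m : ℤ) :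
    vv ^ a * kFactor m - KK * vv ^ (-m) * (vv ^ a - vv ^ (-a)) = kFactor (a + m) := by
  have hK : KK ≠ 0 := RatFunc.X_ne_zero
  simp only [kFactor, zpow_neg, zpow_add₀ vv_ne_zero, mul_inv]
  field_simp
  ring

theorem Finset.sum_range_add_two_eq_of_pascal {M : Type*} [AddCommMonoid M] {n : ℕ}
    {T X Y : ℕ → M} (h0 : T 0 = X 0) (hsucc : ∀ t, T (t + 1) = X (t + 1) + Y t)
    (hlast : X (n + 1) = 0) :
    ∑ t ∈ range (n + 2), T t = ∑ t ∈ range (n + 1), (X t + Y t) := by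
  rw [sum_range_succ', h0, sum_congr rfl fun t _ => hsucc t, sum_add_distrib, add_right_comm,
    ← sum_range_succ' X, sum_range_succ X, hlast, add_zero, sum_add_distrib]

noncomputable def kTerm (r : ℤ) (s t : ℕ) : F2 :=
  (-1) ^ t * vv ^ (r * ((s : ℤ) - t)) * qbinomF s t * KK ^ t *
    (∏ i ∈ range t, (vv ^ (r + i) - vv ^ (-(r + i)))) * kProd (s - t)

theorem sum_kTerm (r : ℤ) (s : ℕ) :
    ∑ t ∈ range (s + 1), kTerm r s t = ∏ j ∈ range s, kFactor (r + j) := by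
  induction s with
  | zero => simp [kTerm, qbinomF_zero_right, kProd]
  | succ s ih =>
    set X : ℕ → F2 := fun t =>
      (-1) ^ t * vv ^ (r * ((s : ℤ) + 1 - t)) * (vv ^ (t : ℤ) * qbinomF s t) * KK ^ t *
        (∏ i ∈ range t, (vv ^ (r + i) - vv ^ (-(r + i)))) * kProd (s + 1 - t)
    set Y : ℕ → F2 := fun t =>
      (-1) ^ (t + 1) * vv ^ (r * ((s : ℤ) - t)) * (vv ^ ((t : ℤ) - s) * qbinomF s t) *
        KK ^ (t + 1) * (∏ i ∈ range (t + 1), (vv ^ (r + i) - vv ^ (-(r + i)))) * kProd (s - t)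
    have hXY : ∀ t ∈ range (s + 1), X t + Y t = kTerm r s t * kFactor (r + s) := by
      intro t ht
      obtain ⟨m, rfl⟩ := Nat.exists_eq_add_of_le (Nat.lt_succ_iff.mp (mem_range.mp ht))
      have hkey := kFactor_add (r + t) m
      simp only [X, Y, kTerm, Nat.add_sub_cancel_left, show t + m + 1 - t = m + 1 by omega,
        kProd_succ, prod_range_succ]
      push_cast
      rw [show r * ((t : ℤ) + m + 1 - t) = r * m + r by ring,
        show r * ((t : ℤ) + m - t) = r * m by ring, show (t : ℤ) - (t + m) = -m by ring,
        ← add_assoc, zpow_add₀ vv_ne_zero (r * m)]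
      rw [zpow_add₀ vv_ne_zero r t] at hkey ⊢
      linear_combination ((-1) ^ t * vv ^ (r * m) * qbinomF (↑t + ↑m) t * KK ^ t *
          (∏ i ∈ range t, (vv ^ (r + ↑i) - vv ^ (-(r + ↑i)))) * kProd m) * hkey
    calc ∑ t ∈ range (s + 1 + 1), kTerm r (s + 1) t
        = ∑ t ∈ range (s + 1), (X t + Y t) := by
          refine sum_range_add_two_eq_of_pascal ?_ (fun t => ?_) ?_
          · simp [X, kTerm, qbinomF_zero_right]
          · simp only [X, Y, kTerm]
            rw [Nat.add_sub_add_right, Nat.cast_add_one, qbinomF_add_one_add_one]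
            push_cast
            ring_nf
          · simp [X, qbinomF_natCast_of_lt (Nat.lt_succ_self s)]
      _ = (∑ t ∈ range (s + 1), kTerm r s t) * kFactor (r + s) := by
          rw [sum_congr rfl hXY, sum_mul]
      _ = ∏ j ∈ range (s + 1), kFactor (r + j) := by
          rw [ih, prod_range_succ]

theorem summand_eq_mul_kTerm {r s t : ℕ} (ht : t ≤ s) :
    (-1 : F2) ^ t * vv ^ ((r : ℤ) * ((s : ℤ) - (t : ℤ))) * qbinomF ((r : ℤ) + (t : ℤ) - 1) t *
        KK ^ t * Kbr 0 r * Kbr 0 (s - t) =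
      kProd r / (qfactF r * qfactF s * (vv - vv⁻¹) ^ (r + s)) * kTerm r s t := by
  have hprod : ∏ i ∈ range t, (vv ^ ((r : ℤ) + i) - vv ^ (-((r : ℤ) + i))) =
      (∏ i ∈ range t, qintF ((r : ℤ) + i)) * (vv - vv⁻¹) ^ t := by
    simp only [← qintF_mul_vv_sub_inv, prod_mul_distrib, prod_const, card_range]
  have := qfactF_ne_zero s
  have := vv_sub_inv_ne_zero
  rw [qbinomF_add_sub_one, Kbr_zero_eq, Kbr_zero_eq, kTerm, hprod, qbinomF_natCast ht,
    show r + s = r + (s - t) + t by omega, pow_add, pow_add]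
  generalize vv - vv⁻¹ = u at *
  field_simp

theorem stmt3_general (r s : ℕ) :
    ∑ t ∈ Finset.range (s + 1),
        (-1 : F2) ^ t * vv ^ ((r : ℤ) * ((s : ℤ) - (t : ℤ))) *
          qbinomF ((r : ℤ) + (t : ℤ) - 1) t * KK ^ t * Kbr 0 r * Kbr 0 (s - t) =
      qbinomF ((r : ℤ) + (s : ℤ)) r * Kbr 0 (r + s) := by
  have hsplit : kProd (r + s) = kProd r * ∏ j ∈ range s, kFactor (r + j) := by
    simp only [kProd, prod_range_add, Nat.cast_add]
  rw [sum_congr rfl fun t ht => summand_eq_mul_kTerm (Nat.lt_succ_iff.mp (mem_range.mp ht)),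
    ← mul_sum, sum_kTerm, Kbr_zero_eq, hsplit, ← Nat.cast_add,
    qbinomF_natCast (Nat.le_add_right r s), Nat.add_sub_cancel_left]
  have := qfactF_ne_zero (r + s)
  generalize vv - vv⁻¹ = u
  field_simp

/-- For integers `r > 0`, `s ≥ 0`, in `ℚ(v,K)`:
`∑_{t=0}^{s} (−1)^t v^{r(s−t)} [r+t−1 choose t]_v K^t [K;0,r]_v [K;0,s−t]_v
  = [r+s choose r]_v [K;0,r+s]_v`. -/
theorem stmt3 (r s : ℕ) (hr : 0 < r) :
    ∑ t ∈ Finset.range (s + 1),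
        (-1 : F2) ^ t * vv ^ ((r : ℤ) * ((s : ℤ) - (t : ℤ))) *
          qbinomF ((r : ℤ) + (t : ℤ) - 1) t * KK ^ t * Kbr 0 r * Kbr 0 (s - t) =
      qbinomF ((r : ℤ) + (s : ℤ)) r * Kbr 0 (r + s) :=
  stmt3_general r s
end

section
/- Let A be an associative ℚ(v)-algebra containing elements x, y, z satisfying x y = v y x + v z, x z = v^{−1} z x, and y z = v z y. Then for all m, n ≥ 0, x^{(m)} y^{(n)} = ∑_{j=0}^{min(m,n)} v^{j + (m−j)(n−j)} y^{(n−j)} z^{(j)} x^{(m−j)}. -/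
/-- `v^n` in `ℚ(v)` for `n : ℤ`. -/
noncomputable def qv (n : ℤ) : RatFunc ℚ := (RatFunc.X : RatFunc ℚ) ^ n

/-- The balanced quantum integer `[m]_v = (v^m − v^{−m})/(v − v^{−1})` in `ℚ(v)`. -/
noncomputable def qint (m : ℕ) : RatFunc ℚ := (qv m - qv (-(m : ℤ))) / (qv 1 - qv (-1))

/-- The balanced quantum factorial `[m]!_v` in `ℚ(v)`. -/
noncomputable def qfact (m : ℕ) : RatFunc ℚ := ∏ k ∈ Finset.range m, qint (k + 1)

/-- The divided power `x^{(m)} = x^m/[m]!_v` in a `ℚ(v)`-algebra. -/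
noncomputable def dp {A : Type*} [Ring A] [Algebra (RatFunc ℚ) A] (x : A) (m : ℕ) : A :=
  (qfact m)⁻¹ • x ^ m

/-!
Commute `x` to the right: the first relation, with `z y = v⁻¹ y z` to collect the error terms,
gives `x y^{(k+1)} = v^{k+1} y^{(k+1)} x + v y^{(k)} z`; moreover `x z^{(j)} = v^{-j} z^{(j)} x`
and `x x^{(b)} = [b+1] x^{(b+1)}`. Hence left multiplication by `x` sends the right-hand side
for `m` to `[m+1]` times the right-hand side for `m + 1`, and the formula follows by induction
on `m`. On coefficients this step is the identity `[m+1] = v^{-j} [m+1-j] + v^{m+1-j} [j]`.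
-/

lemma qv_add (a b : ℤ) : qv (a + b) = qv a * qv b := zpow_add₀ RatFunc.X_ne_zero a b

lemma qv_zero : qv 0 = 1 := zpow_zero _

lemma qv_pow (a : ℤ) (k : ℕ) : qv a ^ k = qv (a * k) := (zpow_mul _ a k).symm

lemma qv_sub_qv_neg_ne_zero {m : ℕ} (hm : m ≠ 0) : qv m - qv (-(m : ℤ)) ≠ 0 := by
  have hpoly : (Polynomial.X ^ (2 * m) - 1 : Polynomial ℚ) ≠ 0 :=
    Polynomial.X_pow_sub_C_ne_zero (by omega) 1
  have hfactor : qv m - qv (-(m : ℤ)) =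
      qv (-(m : ℤ)) * algebraMap (Polynomial ℚ) (RatFunc ℚ) (Polynomial.X ^ (2 * m) - 1) := by
    rw [map_sub, map_pow, map_one, RatFunc.algebraMap_X, mul_sub, mul_one, ← zpow_natCast,
      qv, qv, ← zpow_add₀ RatFunc.X_ne_zero]
    push_cast
    ring_nf
  rw [hfactor]
  exact mul_ne_zero (zpow_ne_zero _ RatFunc.X_ne_zero) (RatFunc.algebraMap_ne_zero hpoly)

lemma qint_ne_zero {m : ℕ} (hm : m ≠ 0) : qint m ≠ 0 :=
  div_ne_zero (qv_sub_qv_neg_ne_zero hm) (by simpa using qv_sub_qv_neg_ne_zero one_ne_zero)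

lemma qint_zero : qint 0 = 0 := by simp [qint]

lemma qint_add (a b : ℕ) : qint (a + b) = qv (-(b : ℤ)) * qint a + qv a * qint b := by
  simp only [qint, mul_div_assoc', ← add_div, mul_sub, ← qv_add]
  congr 1
  push_cast
  ring_nf

lemma qint_one : qint 1 = 1 := by
  simpa [qint] using div_self (qv_sub_qv_neg_ne_zero one_ne_zero)

lemma qfact_ne_zero (m : ℕ) : qfact m ≠ 0 :=
  Finset.prod_ne_zero_iff.mpr fun k _ => qint_ne_zero k.succ_ne_zero

lemma qint_mul_inv_qfact_succ (m : ℕ) : qint (m + 1) * (qfact (m + 1))⁻¹ = (qfact m)⁻¹ := by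
  rw [qfact, Finset.prod_range_succ, ← qfact, mul_inv, mul_left_comm,
    mul_inv_cancel₀ (qint_ne_zero m.succ_ne_zero), mul_one]

/-- The exponent is computed in `ℤ`, and the coefficient is extended by `0` beyond `j = n`, so
that the straightened sum can run over all `j ≤ m` without truncated subtraction. -/
noncomputable def straighteningCoeff (m n j : ℕ) : RatFunc ℚ :=
  if j ≤ n then qv (j + ((m : ℤ) - j) * ((n : ℤ) - j)) else 0

lemma straighteningCoeff_succ_zero (m n : ℕ) :
    qint (m + 1) * straighteningCoeff (m + 1) n 0 =
      straighteningCoeff m n 0 * qv n * qint (m + 1) := by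
  simp only [straighteningCoeff, zero_le, if_true]
  rw [← qv_add, mul_comm]
  congr 2
  push_cast
  ring

lemma straighteningCoeff_succ_succ {m n j : ℕ} (hj : j ≤ m) :
    qint (m + 1) * straighteningCoeff (m + 1) n (j + 1) =
      straighteningCoeff m n (j + 1) *
          (qv ↑(n - (j + 1)) * qv (-1) ^ (j + 1) * qint (m + 1 - (j + 1))) +
        straighteningCoeff m n j * (if 0 < n - j then qv 1 * qint (j + 1) else 0) := by
  by_cases hjn : j + 1 ≤ n
  · have hsplit :
        qint (m + 1) = qv (-↑(j + 1)) * qint (m - j) + qv ↑(m - j) * qint (j + 1) := by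
      rw [← qint_add]
      congr 1
      omega
    have h1 : qv (↑(j + 1) + (↑m - ↑(j + 1)) * (↑n - ↑(j + 1))) *
          (qv ↑(n - (j + 1)) * qv (-1) ^ (j + 1))
        = qv (-↑(j + 1)) * qv (↑(j + 1) + (↑(m + 1) - ↑(j + 1)) * (↑n - ↑(j + 1))) := by
      rw [qv_pow, ← qv_add, ← qv_add, ← qv_add]
      congr 1
      push_cast [Nat.cast_sub hjn]
      ring
    have h2 : qv (↑j + (↑m - ↑j) * (↑n - ↑j)) * qv 1
        = qv ↑(m - j) * qv (↑(j + 1) + (↑(m + 1) - ↑(j + 1)) * (↑n - ↑(j + 1))) := by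
      rw [← qv_add, ← qv_add]
      congr 1
      push_cast [Nat.cast_sub hj]
      ring
    simp only [straighteningCoeff, if_pos hjn, if_pos (Nat.le_of_succ_le hjn),
      if_pos (Nat.sub_pos_of_lt hjn), show m + 1 - (j + 1) = m - j by omega, hsplit]
    linear_combination -(qint (m - j) * h1 + qint (j + 1) * h2)
  · have hnj : ¬ 0 < n - j := by omega
    simp [straighteningCoeff, hjn, hnj]

lemma mul_pow_eq_smul_of_mul_eq_smul {R A : Type*} [CommSemiring R] [Semiring A] [Algebra R A]
    {a b : A} {c : R} (h : a * b = c • (b * a)) (k : ℕ) :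
    a * b ^ k = c ^ k • (b ^ k * a) := by
  induction k with
  | zero => simp
  | succ k ih =>
    rw [pow_succ, ← mul_assoc, ih, smul_mul_assoc, mul_assoc, h, mul_smul_comm, smul_smul,
      ← pow_succ, mul_assoc]

section DividedPowers

open Finset

variable {A : Type*} [Ring A] [Algebra (RatFunc ℚ) A]

lemma dp_zero (a : A) : dp a 0 = 1 := by simp [dp, qfact]

lemma mul_dp_self (a : A) (m : ℕ) : a * dp a m = qint (m + 1) • dp a (m + 1) := by
  rw [dp, dp, smul_smul, qint_mul_inv_qfact_succ, mul_smul_comm, pow_succ']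

lemma mul_dp_eq_smul_of_mul_eq_smul {a b : A} {c : RatFunc ℚ} (h : a * b = c • (b * a))
    (k : ℕ) :
    a * dp b k = c ^ k • (dp b k * a) := by
  rw [dp, mul_smul_comm, mul_pow_eq_smul_of_mul_eq_smul h, smul_comm, smul_mul_assoc]

noncomputable def straighteningSum (x y z : A) (m n : ℕ) : A :=
  ∑ j ∈ range (m + 1), straighteningCoeff m n j • (dp y (n - j) * dp z j * dp x (m - j))

lemma straighteningSum_eq (x y z : A) (m n : ℕ) :
    straighteningSum x y z m n = ∑ j ∈ range (min m n + 1),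
      qv ((j : ℤ) + ((m - j) * (n - j) : ℕ)) • (dp y (n - j) * dp z j * dp x (m - j)) := by
  have hsub : range (min m n + 1) ⊆ range (m + 1) := range_subset_range.mpr (by omega)
  rw [straighteningSum, ← sum_subset hsub]
  · refine sum_congr rfl fun j hj => ?_
    have hjm : j ≤ m := by have := mem_range.mp hj; omega
    have hjn : j ≤ n := by have := mem_range.mp hj; omega
    rw [straighteningCoeff, if_pos hjn]
    push_cast [hjm, hjn]
    rfl
  · intro j hjm hjmn
    have hjn : ¬ j ≤ n := by simp only [mem_range] at hjm hjmn; omega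
    rw [straighteningCoeff, if_neg hjn, zero_smul]

variable {x y z : A}

lemma mul_pow_succ_of_mul_eq (hxy : x * y = qv 1 • (y * x) + qv 1 • z)
    (hzy : z * y = qv (-1) • (y * z)) (k : ℕ) :
    x * y ^ (k + 1) = qv (k + 1) • (y ^ (k + 1) * x) + (qv 1 * qint (k + 1)) • (y ^ k * z) := by
  induction k with
  | zero => simp [hxy, qint_one]
  | succ k ih =>
    have hcoeff : qv 1 * qint (k + 1 + 1) = qv (k + 1) * qv 1 + qv 1 * qint (k + 1) * qv (-1) := by
      rw [qint_add (k + 1) 1, qint_one]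
      push_cast
      ring
    rw [pow_succ y (k + 1), ← mul_assoc, ih, add_mul, smul_mul_assoc, smul_mul_assoc, mul_assoc,
      hxy, mul_assoc, hzy]
    simp only [mul_add, mul_smul_comm, ← mul_assoc, ← pow_succ]
    push_cast at hcoeff ⊢
    rw [hcoeff, qv_add ((k : ℤ) + 1) 1, add_smul, smul_add, smul_smul, smul_smul, smul_smul]
    abel

lemma mul_dp_succ_of_mul_eq (hxy : x * y = qv 1 • (y * x) + qv 1 • z)
    (hzy : z * y = qv (-1) • (y * z)) (k : ℕ) :
    x * dp y (k + 1) = qv (k + 1) • (dp y (k + 1) * x) + qv 1 • (dp y k * z) := by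
  have hcoeff : (qfact (k + 1))⁻¹ * (qv 1 * qint (k + 1)) = qv 1 * (qfact k)⁻¹ := by
    rw [← qint_mul_inv_qfact_succ k]
    ring
  rw [dp, dp, mul_smul_comm, mul_pow_succ_of_mul_eq hxy hzy]
  simp only [smul_add, smul_smul, smul_mul_assoc, hcoeff, mul_comm (qfact (k + 1))⁻¹]

lemma mul_dp_mul_dp_of_mul_eq (hxz : x * z = qv (-1) • (z * x)) (j b : ℕ) :
    x * (dp z j * dp x b) = (qv (-1) ^ j * qint (b + 1)) • (dp z j * dp x (b + 1)) := by
  rw [← mul_assoc, mul_dp_eq_smul_of_mul_eq_smul hxz, smul_mul_assoc, mul_assoc, mul_dp_self,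
    mul_smul_comm, smul_smul]

lemma mul_dp_mul_dp_mul_dp (hxy : x * y = qv 1 • (y * x) + qv 1 • z)
    (hxz : x * z = qv (-1) • (z * x)) (hzy : z * y = qv (-1) • (y * z)) (a j b : ℕ) :
    x * (dp y a * dp z j * dp x b) =
      (qv a * qv (-1) ^ j * qint (b + 1)) • (dp y a * dp z j * dp x (b + 1)) +
      (if 0 < a then qv 1 * qint (j + 1) else 0) • (dp y (a - 1) * dp z (j + 1) * dp x b) := by
  cases a with
  | zero =>
    simp only [dp_zero, one_mul, Nat.cast_zero, qv_zero, lt_self_iff_false, if_false, zero_smul,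
      add_zero]
    rw [mul_dp_mul_dp_of_mul_eq hxz]
  | succ a =>
    simp only [Nat.succ_pos, if_true, Nat.add_sub_cancel]
    rw [mul_assoc, ← mul_assoc x, mul_dp_succ_of_mul_eq hxy hzy, add_mul, smul_mul_assoc,
      smul_mul_assoc, mul_assoc, mul_dp_mul_dp_of_mul_eq hxz, mul_assoc, ← mul_assoc z,
      mul_dp_self]
    simp only [mul_smul_comm, smul_mul_assoc, smul_smul, mul_assoc, Nat.cast_add, Nat.cast_one]

lemma mul_straighteningSum (hxy : x * y = qv 1 • (y * x) + qv 1 • z)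
    (hxz : x * z = qv (-1) • (z * x)) (hzy : z * y = qv (-1) • (y * z)) (m n : ℕ) :
    x * straighteningSum x y z m n = qint (m + 1) • straighteningSum x y z (m + 1) n := by
  set T : ℕ → A := fun j => dp y (n - j) * dp z j * dp x (m + 1 - j) with hT
  set F : ℕ → RatFunc ℚ := fun j =>
    straighteningCoeff m n j * (qv ↑(n - j) * qv (-1) ^ j * qint (m + 1 - j)) with hF
  set G : ℕ → RatFunc ℚ := fun j =>
    straighteningCoeff m n j * (if 0 < n - j then qv 1 * qint (j + 1) else 0) with hG
  have hterm : ∀ j ∈ range (m + 1),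
      x * (straighteningCoeff m n j • (dp y (n - j) * dp z j * dp x (m - j))) =
        F j • T j + G j • T (j + 1) := by
    intro j hj
    have hjm : m - j + 1 = m + 1 - j := by have := mem_range.mp hj; omega
    rw [mul_smul_comm, mul_dp_mul_dp_mul_dp hxy hxz hzy, smul_add, smul_smul, smul_smul, hjm,
      Nat.sub_sub]
    simp only [hT, hF, hG, Nat.add_sub_add_right]
  have hlast : F (m + 1) • T (m + 1) = 0 := by simp [hF, qint_zero]
  calc x * straighteningSum x y z m n
      = ∑ j ∈ range (m + 1), (F j • T j + G j • T (j + 1)) := by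
        rw [straighteningSum, mul_sum]
        exact sum_congr rfl hterm
    _ = F 0 • T 0 + ∑ j ∈ range (m + 1), (F (j + 1) + G j) • T (j + 1) := by
        rw [sum_add_distrib, ← add_zero (∑ j ∈ range (m + 1), F j • T j), ← hlast,
          ← sum_range_succ, sum_range_succ']
        simp only [add_smul, sum_add_distrib]
        abel
    _ = qint (m + 1) • straighteningSum x y z (m + 1) n := by
        rw [straighteningSum, smul_sum, sum_range_succ' _ (m + 1)]
        simp only [smul_smul]
        rw [add_comm, straighteningCoeff_succ_zero]
        congr 1
        · refine sum_congr rfl fun j hj => ?_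
          rw [straighteningCoeff_succ_succ (Nat.lt_succ_iff.mp (mem_range.mp hj))]
        · simp only [hF, hT, Nat.sub_zero, pow_zero, one_mul, mul_assoc]

lemma dp_mul_dp_eq_straighteningSum (hxy : x * y = qv 1 • (y * x) + qv 1 • z)
    (hxz : x * z = qv (-1) • (z * x)) (hzy : z * y = qv (-1) • (y * z)) (m n : ℕ) :
    dp x m * dp y n = straighteningSum x y z m n := by
  induction m with
  | zero => simp [straighteningSum, straighteningCoeff, dp_zero, qv_zero]
  | succ m ih =>
    rw [← smul_right_inj (qint_ne_zero m.succ_ne_zero), ← mul_straighteningSum hxy hxz hzy,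
      ← ih, ← mul_assoc, mul_dp_self, smul_mul_assoc]

end DividedPowers

/-- Levendorskii–Soibelman-type straightening rule for divided powers: if `x y = v y x + v z`,
`x z = v^{−1} z x`, `y z = v z y` in a `ℚ(v)`-algebra, then for all `m, n ≥ 0`,
`x^{(m)} y^{(n)} = ∑_{j=0}^{min(m,n)} v^{j+(m−j)(n−j)} y^{(n−j)} z^{(j)} x^{(m−j)}`. -/
theorem stmt7 {A : Type*} [Ring A] [Algebra (RatFunc ℚ) A] (x y z : A)
    (hxy : x * y = qv 1 • (y * x) + qv 1 • z)
    (hxz : x * z = qv (-1) • (z * x))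
    (hyz : y * z = qv 1 • (z * y)) :
    ∀ m n : ℕ, dp x m * dp y n =
      ∑ j ∈ Finset.range (Nat.min m n + 1),
        qv ((j : ℤ) + ((m - j) * (n - j) : ℕ)) • (dp y (n - j) * dp z j * dp x (m - j)) := by
  have hzy : z * y = qv (-1) • (y * z) := by
    rw [hyz, smul_smul, ← qv_add, neg_add_cancel, qv_zero, one_smul]
  intro m n
  rw [dp_mul_dp_eq_straighteningSum hxy hxz hzy]
  exact straighteningSum_eq x y z m n
end

section
/- Let A be an associative ℚ(v)-algebra with elements E₁, …, E_{n−1} satisfying E_i E_j = E_j E_i for |i−j| > 1 and the quantum Serre relations E_i² E_j − (v + v^{−1}) E_i E_j E_i + E_j E_i² = 0 for |i−j| = 1. Define root vectors E_{i,i+1} := E_i and, for j − i ≥ 2, E_{i,j} := −E_{i,j−1} E_{j−1} + v^{−1} E_{j−1} E_{i,j−1}. Then for all 1 ≤ i < k < j ≤ n, E_{i,j} = −E_{i,k} E_{k,j} + v^{−1} E_{k,j} E_{i,k}; that is, the iterated q-bracket defining E_{i,j} is independent of the choice of intermediate index k. -/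
/-- The quantum root vectors `E_{i,j}` (for `i < j`) defined recursively from the simple
root vectors `E i`: `E_{i,i+1} = E_i` and `E_{i,j} = −E_{i,j−1}E_{j−1} + v^{−1}E_{j−1}E_{i,j−1}`
for `j − i ≥ 2`.  (Values with `j ≤ i` are junk.) -/
noncomputable def Evec {A : Type*} [Ring A] [Algebra (RatFunc ℚ) A] (E : ℕ → A) (i : ℕ) :
    ℕ → A
  | 0 => 0
  | j + 1 =>
    if i = j then E i
    else -(Evec E i j * E j) + qv (-1) • (E j * Evec E i j)

/-- Auxiliary bracket identity: if `F` commutes with `X`, the `q`-bracket commutes past. -/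
lemma key_qbracket {A : Type*} [Ring A] [Algebra (RatFunc ℚ) A] (c : RatFunc ℚ) (X Y F : A)
    (h : F * X = X * F) :
    -((-(X*Y) + c•(Y*X)) * F) + c • (F * (-(X*Y) + c•(Y*X)))
      = -(X * (-(Y*F) + c•(F*Y))) + c • ((-(Y*F)+c•(F*Y)) * X) := by
  have h1 : Y*X*F = Y*F*X := by rw [mul_assoc, ← h, ← mul_assoc]
  have h2 : F*(X*Y) = X*(F*Y) := by rw [← mul_assoc, h, mul_assoc]
  simp only [mul_add, add_mul, mul_neg, neg_mul, mul_smul_comm, smul_mul_assoc, neg_neg,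
    smul_neg, smul_smul, smul_add]
  rw [show F*(Y*X) = F*Y*X from (mul_assoc ..).symm, ← mul_assoc X Y F, h1, h2,
    mul_assoc Y F X]
  abel

/-- Let `A` be an associative `ℚ(v)`-algebra with elements `E₁, …, E_{n−1}` satisfying
`E_i E_j = E_j E_i` for `|i−j| > 1` and the quantum Serre relations
`E_i² E_j − (v + v^{−1}) E_i E_j E_i + E_j E_i² = 0` for `|i−j| = 1`.  Then for all
`1 ≤ i < k < j ≤ n`, `E_{i,j} = −E_{i,k} E_{k,j} + v^{−1} E_{k,j} E_{i,k}`: the iterated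
`q`-bracket defining `E_{i,j}` is independent of the intermediate index `k`. -/
theorem stmt10 {A : Type*} [Ring A] [Algebra (RatFunc ℚ) A] (n : ℕ) (E : ℕ → A)
    (hcomm : ∀ i j : ℕ, 1 ≤ i → i < n → 1 ≤ j → j < n → (i + 1 < j ∨ j + 1 < i) →
      E i * E j = E j * E i)
    (hserre : ∀ i j : ℕ, 1 ≤ i → i < n → 1 ≤ j → j < n → (j = i + 1 ∨ i = j + 1) →
      E i ^ 2 * E j - (qv 1 + qv (-1)) • (E i * E j * E i) + E j * E i ^ 2 = 0) :
    ∀ i k j : ℕ, 1 ≤ i → i < k → k < j → j ≤ n →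
      Evec E i j = -(Evec E i k * Evec E k j) + qv (-1) • (Evec E k j * Evec E i k) := by
  have hc : ∀ j, 1 ≤ j → j < n → ∀ i k, 1 ≤ i → i < k → k < j →
      E j * Evec E i k = Evec E i k * E j := by
    intro j hj1 hjn i k
    induction k with
    | zero => intro _ h _; omega
    | succ m ih =>
      intro hi him hmj
      rw [Evec]
      by_cases h : i = m
      · simp only [h, if_pos rfl]
        exact (hcomm m j (by omega) (by omega) hj1 hjn (by omega)).symm
      · simp only [h, if_false]
        have h1 : E j * Evec E i m = Evec E i m * E j := ih hi (by omega) (by omega)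
        have h2 : E j * E m = E m * E j :=
          (hcomm m j (by omega) (by omega) hj1 hjn (by omega)).symm
        rw [mul_add, add_mul, mul_neg, neg_mul, mul_smul_comm, smul_mul_assoc,
          ← mul_assoc, h1, mul_assoc, h2, ← mul_assoc,
          ← mul_assoc (E j) (E m), h2, mul_assoc (E m) (E j), h1, ← mul_assoc]
  intro i k j hi hik
  induction j with
  | zero => intro h _; omega
  | succ j ih =>
    intro hkj hjn
    by_cases hkj' : k = j
    · subst hkj'
      rw [Evec, if_neg (by omega), show Evec E k (k+1) = E k by rw [Evec, if_pos rfl]]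
    · have hkj2 : k < j := by omega
      rw [Evec, if_neg (by omega), Evec, if_neg hkj', ih hkj2 (by omega)]
      exact key_qbracket _ _ _ _ (hc j (by omega) (by omega) i k hi hik hkj2)
end

section
/- Let A be an associative ℚ(v)-algebra with elements e₁, e₂, e₃ satisfying e₁ e₃ = e₃ e₁ and the quantum Serre relations e_i² e_j − (v + v^{−1}) e_i e_j e_i + e_j e_i² = 0 for |i−j| = 1 (i, j ∈ {1,2,3}). Define E_{1,3} = −e₁e₂ + v^{−1}e₂e₁, E_{2,4} = −e₂e₃ + v^{−1}e₃e₂, E_{1,4} = −E_{1,3}e₃ + v^{−1}e₃E_{1,3}, and E_{2,3} = e₂. Then E_{1,3} E_{2,4} = E_{2,4} E_{1,3} + (v − v^{−1}) E_{1,4} E_{2,3}. -/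
/-- The `q`-bracket building composite root vectors: `qbr x y = −x y + v^{−1} y x`. -/
noncomputable def qbr {A : Type*} [Ring A] [Algebra (RatFunc ℚ) A] (x y : A) : A :=
  -(x * y) + qv (-1) • (y * x)

set_option maxHeartbeats 2000000 in
theorem aux {K : Type*} [Field K] {A : Type*} [Ring A] [Algebra K A]
    (v : K) (hv : v ≠ 0) (hvv : (1 : K) + v ^ 2 ≠ 0) (e1 e2 e3 : A)
    (h13 : e1 * e3 = e3 * e1)
    (hs21 : e2 ^ 2 * e1 - (v + v⁻¹) • (e2 * e1 * e2) + e1 * e2 ^ 2 = 0)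
    (hs23 : e2 ^ 2 * e3 - (v + v⁻¹) • (e2 * e3 * e2) + e3 * e2 ^ 2 = 0) :
    (-(e1 * e2) + v⁻¹ • (e2 * e1)) * (-(e2 * e3) + v⁻¹ • (e3 * e2)) =
      (-(e2 * e3) + v⁻¹ • (e3 * e2)) * (-(e1 * e2) + v⁻¹ • (e2 * e1)) +
      (v - v⁻¹) •
        ((-((-(e1 * e2) + v⁻¹ • (e2 * e1)) * e3) +
          v⁻¹ • (e3 * (-(e1 * e2) + v⁻¹ • (e2 * e1)))) * e2) := by
  have hZ : e1 * e3 - e3 * e1 = 0 := sub_eq_zero.mpr h13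
  have key : ((1 : K) + v ^ 2) •
      ((-(e1 * e2) + v⁻¹ • (e2 * e1)) * (-(e2 * e3) + v⁻¹ • (e3 * e2)) -
      ((-(e2 * e3) + v⁻¹ • (e3 * e2)) * (-(e1 * e2) + v⁻¹ • (e2 * e1)) +
      (v - v⁻¹) •
        ((-((-(e1 * e2) + v⁻¹ • (e2 * e1)) * e3) +
          v⁻¹ • (e3 * (-(e1 * e2) + v⁻¹ • (e2 * e1)))) * e2))) =
      ((e2 ^ 2 * e1 - (v + v⁻¹) • (e2 * e1 * e2) + e1 * e2 ^ 2) * e3)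
      - (v⁻¹ ^ 2) •
        (e3 * (e2 ^ 2 * e1 - (v + v⁻¹) • (e2 * e1 * e2) + e1 * e2 ^ 2))
      - ((e2 ^ 2 * e3 - (v + v⁻¹) • (e2 * e3 * e2) + e3 * e2 ^ 2) * e1)
      + (v ^ 2) •
        (e1 * (e2 ^ 2 * e3 - (v + v⁻¹) • (e2 * e3 * e2) + e3 * e2 ^ 2))
      - e2 * (e2 * (e1 * e3 - e3 * e1))
      + ((1 : K) + v ^ 2) • (e2 * ((e1 * e3 - e3 * e1) * e2))
      - (v ^ 2) • ((e1 * e3 - e3 * e1) * (e2 * e2)) := by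
    simp only [pow_two, mul_add, add_mul, mul_sub, sub_mul, neg_mul, mul_neg, smul_mul_assoc,
      mul_smul_comm, smul_smul, smul_sub, smul_add, smul_neg, neg_neg, mul_assoc]
    match_scalars
    all_goals try ring
    all_goals try (field_simp [hv]; try ring)
    all_goals (simp only [inv_pow]; field_simp [hv]; ring)
  rw [hs21, hs23, hZ] at key
  simp only [zero_mul, mul_zero, smul_zero, sub_zero, add_zero, zero_sub, neg_zero,
    sub_self] at key
  have := congrArg (fun z => ((1 : K) + v ^ 2)⁻¹ • z) key
  simp only [inv_smul_smul₀ hvv, smul_zero] at this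
  exact sub_eq_zero.mp this


/-- LS straightening for `U_v(sl₄)`: with `E_{1,3} = −e₁e₂ + v^{−1}e₂e₁`,
`E_{2,4} = −e₂e₃ + v^{−1}e₃e₂`, `E_{1,4} = −E_{1,3}e₃ + v^{−1}e₃E_{1,3}`, `E_{2,3} = e₂`,
one has `E_{1,3} E_{2,4} = E_{2,4} E_{1,3} + (v − v^{−1}) E_{1,4} E_{2,3}`. -/
theorem stmt11 {A : Type*} [Ring A] [Algebra (RatFunc ℚ) A] (e1 e2 e3 : A)
    (h13 : e1 * e3 = e3 * e1)
    (hs12 : e1 ^ 2 * e2 - (qv 1 + qv (-1)) • (e1 * e2 * e1) + e2 * e1 ^ 2 = 0)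
    (hs21 : e2 ^ 2 * e1 - (qv 1 + qv (-1)) • (e2 * e1 * e2) + e1 * e2 ^ 2 = 0)
    (hs23 : e2 ^ 2 * e3 - (qv 1 + qv (-1)) • (e2 * e3 * e2) + e3 * e2 ^ 2 = 0)
    (hs32 : e3 ^ 2 * e2 - (qv 1 + qv (-1)) • (e3 * e2 * e3) + e2 * e3 ^ 2 = 0) :
    qbr e1 e2 * qbr e2 e3 =
      qbr e2 e3 * qbr e1 e2 + (qv 1 - qv (-1)) • (qbr (qbr e1 e2) e3 * e2) := by
  have hX : (RatFunc.X : RatFunc ℚ) ≠ 0 := RatFunc.X_ne_zero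
  have hq1 : qv 1 = (RatFunc.X : RatFunc ℚ) := zpow_one _
  have hqm1 : qv (-1) = (RatFunc.X : RatFunc ℚ)⁻¹ := by simp [qv]
  have hvv : (1 : RatFunc ℚ) + RatFunc.X ^ 2 ≠ 0 := by
    have h0 : (Polynomial.C 1 + Polynomial.X ^ 2 : Polynomial ℚ) ≠ 0 := by
      intro h
      have := congrArg (fun p => Polynomial.coeff p 0) h
      simp at this
    have h3 := RatFunc.algebraMap_ne_zero h0
    simpa [map_add, map_pow, RatFunc.algebraMap_X] using h3
  rw [hq1, hqm1] at hs21 hs23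
  simp only [qbr, hq1, hqm1]
  exact aux (RatFunc.X : RatFunc ℚ) hX hvv e1 e2 e3 h13 hs21 hs23
end
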